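/- arXiv:2503.20517 — 2 statements merged into one kernel-verified Lean document; each statement's English description precedes it below -/
import Mathlib

section
/- If solution p1 Pareto-dominates solution p2 (for minimization), then with positive ideal = coordinatewise minimum and negative ideal = coordinatewise maximum over the set of alternatives, S_{1+} ≤ S_{2+} and S_{1−} ≥ S_{2−}; hence the TOPSIS score of p1 is at least that of p2. -/
/-- If `i₁` Pareto-dominates `i₂` (for minimization), then `i₁` is closer to the
positive ideal and farther from the negative ideal, hence its TOPSIS score is
at least that of `i₂`. -/
theorem topsis_dominance_score {n m : ℕ} (V : Fin n → Fin m → ℝ)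
    (hV : ∀ i o, 0 ≤ V i o)
    (hne : (Finset.univ : Finset (Fin n)).Nonempty)
    (Ap Am : Fin m → ℝ)
    (hAp : ∀ o, Ap o = Finset.univ.inf' hne fun i => V i o)
    (hAm : ∀ o, Am o = Finset.univ.sup' hne fun i => V i o)
    (Sp Sm : Fin n → ℝ)
    (hSp : ∀ i, Sp i = Real.sqrt (∑ o, (V i o - Ap o) ^ 2))
    (hSm : ∀ i, Sm i = Real.sqrt (∑ o, (V i o - Am o) ^ 2))
    (i₁ i₂ : Fin n)
    (hdom : (∀ o, V i₁ o ≤ V i₂ o) ∧ ∃ o, V i₁ o < V i₂ o)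
    (hden₁ : 0 < Sm i₁ + Sp i₁) (hden₂ : 0 < Sm i₂ + Sp i₂) :
    Sp i₁ ≤ Sp i₂ ∧ Sm i₂ ≤ Sm i₁ ∧
      Sm i₂ / (Sm i₂ + Sp i₂) ≤ Sm i₁ / (Sm i₁ + Sp i₁) := by
  have hApLe : ∀ i o, Ap o ≤ V i o := by
    intro i o; rw [hAp]; exact Finset.inf'_le _ (Finset.mem_univ i)
  have hLeAm : ∀ i o, V i o ≤ Am o := by
    intro i o; rw [hAm]; exact Finset.le_sup' (fun i => V i o) (Finset.mem_univ i)
  have hSp' : Sp i₁ ≤ Sp i₂ := by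
    rw [hSp, hSp]
    apply Real.sqrt_le_sqrt
    apply Finset.sum_le_sum
    intro o _
    have h1 : 0 ≤ V i₁ o - Ap o := by linarith [hApLe i₁ o]
    have h2 : V i₁ o - Ap o ≤ V i₂ o - Ap o := by linarith [hdom.1 o]
    exact pow_le_pow_left₀ h1 h2 2
  have hSm' : Sm i₂ ≤ Sm i₁ := by
    rw [hSm, hSm]
    apply Real.sqrt_le_sqrt
    apply Finset.sum_le_sum
    intro o _
    have h1 : 0 ≤ Am o - V i₂ o := by linarith [hLeAm i₂ o]
    have h2 : Am o - V i₂ o ≤ Am o - V i₁ o := by linarith [hdom.1 o]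
    calc (V i₂ o - Am o) ^ 2 = (Am o - V i₂ o) ^ 2 := by ring
      _ ≤ (Am o - V i₁ o) ^ 2 := pow_le_pow_left₀ h1 h2 2
      _ = (V i₁ o - Am o) ^ 2 := by ring
  refine ⟨hSp', hSm', ?_⟩
  have hSmnn : ∀ i, 0 ≤ Sm i := fun i => by rw [hSm]; exact Real.sqrt_nonneg _
  have hSpnn : ∀ i, 0 ≤ Sp i := fun i => by rw [hSp]; exact Real.sqrt_nonneg _
  rw [div_le_div_iff₀ hden₂ hden₁]
  nlinarith [mul_le_mul hSm' hSp' (hSpnn i₁) (hSmnn i₁)]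
end

section
/- Adding a point to a finite set never decreases the hypervolume, and strictly increases it if the new point is not weakly dominated by any existing point (all points being componentwise strictly less than the reference point R). -/
open MeasureTheory

/-- Adding a point never decreases the hypervolume, and strictly increases it if
the new point is not weakly dominated by any existing point (all points being
componentwise strictly below the reference point). -/
theorem hypervolume_insert {n : ℕ} (R t : Fin n → ℝ) (S : Finset (Fin n → ℝ))
    (hS : ∀ s ∈ S, ∀ o, s o < R o) (ht : ∀ o, t o < R o) :
    volume (⋃ s ∈ (S : Set (Fin n → ℝ)), Set.Icc s R) ≤
      volume (⋃ s ∈ insert t (S : Set (Fin n → ℝ)), Set.Icc s R) ∧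
    ((∀ s ∈ S, ¬ s ≤ t) →
      volume (⋃ s ∈ (S : Set (Fin n → ℝ)), Set.Icc s R) <
        volume (⋃ s ∈ insert t (S : Set (Fin n → ℝ)), Set.Icc s R)) := by
  classical
  set A := ⋃ s ∈ (S : Set (Fin n → ℝ)), Set.Icc s R with hA
  have hAm : MeasurableSet A :=
    Set.Finite.measurableSet_biUnion S.finite_toSet fun s _ => measurableSet_Icc
  have hAfin : volume A < ⊤ :=
    measure_biUnion_lt_top S.finite_toSet fun s _ =>
      (isCompact_Icc.measure_lt_top)
  refine ⟨measure_mono (Set.biUnion_subset_biUnion_left (Set.subset_insert t _)), ?_⟩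
  intro hnd
  -- for each coordinate, a threshold strictly above t below which no relevant point lies
  set F : Fin n → Finset ℝ := fun o =>
    insert (R o) ((S.filter fun s => t o < s o).image fun s => s o) with hF
  have hFne : ∀ o, (F o).Nonempty := fun o => ⟨R o, Finset.mem_insert_self _ _⟩
  set c : Fin n → ℝ := fun o => (F o).min' (hFne o) with hc
  have htc : ∀ o, t o < c o := by
    intro o
    rw [hc, Finset.lt_min'_iff]
    intro b hb
    rcases Finset.mem_insert.1 hb with rfl | hb
    · exact ht o
    · rcases Finset.mem_image.1 hb with ⟨s, hs, rfl⟩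
      exact (Finset.mem_filter.1 hs).2
  set u : Fin n → ℝ := fun o => (t o + c o) / 2 with hu
  have htu : ∀ o, t o < u o := fun o => by
    simp only [hu]; linarith [htc o]
  have huc : ∀ o, u o < c o := fun o => by
    simp only [hu]; linarith [htc o]
  have hcR : ∀ o, c o ≤ R o := fun o =>
    Finset.min'_le _ _ (Finset.mem_insert_self _ _)
  have huR : ∀ o, u o ≤ R o := fun o => (huc o).le.trans (hcR o)
  -- the box Icc t u
  have hbox_sub : Set.Icc t u ⊆ Set.Icc t R :=
    Set.Icc_subset_Icc le_rfl fun o => huR o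
  have hbox_pos : 0 < volume (Set.Icc t u) := by
    rw [Real.volume_Icc_pi]
    rw [pos_iff_ne_zero]
    refine Finset.prod_ne_zero_iff.2 fun o _ => ?_
    exact (ENNReal.ofReal_pos.2 (by linarith [htu o])).ne'
  have hdisj : Disjoint (Set.Icc t u) A := by
    rw [Set.disjoint_left]
    intro x hx hxA
    rcases Set.mem_iUnion₂.1 hxA with ⟨s, hs, hxs⟩
    obtain ⟨o, ho⟩ : ∃ o, ¬ s o ≤ t o := by
      by_contra h
      push_neg at h
      exact hnd s hs fun o => h o
    have hto : t o < s o := lt_of_not_ge ho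
    have hcs : c o ≤ s o := by
      refine Finset.min'_le _ _ ?_
      exact Finset.mem_insert_of_mem
        (Finset.mem_image.2 ⟨s, Finset.mem_filter.2 ⟨hs, hto⟩, rfl⟩)
    have : x o ≤ u o := hx.2 o
    have : s o ≤ x o := hxs.1 o
    linarith [huc o]
  have key : volume A < volume (Set.Icc t u ∪ A) := by
    rw [measure_union hdisj hAm]
    exact lt_of_lt_of_le (ENNReal.lt_add_right hAfin.ne hbox_pos.ne')
      (by rw [add_comm])
  calc volume A < volume (Set.Icc t u ∪ A) := key
    _ ≤ volume (⋃ s ∈ insert t (S : Set (Fin n → ℝ)), Set.Icc s R) := by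
        rw [Set.biUnion_insert]
        exact measure_mono (Set.union_subset_union_left _ hbox_sub)
end
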